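/- arXiv:2011.06955 — 2 statements merged into one kernel-verified Lean document; each statement's English description precedes it below -/
import Mathlib

section
/- For every fixed u, v ∈ [0,1], the mapping (s,t) ↦ ψ(s,t;u,v) is continuous on (0,∞)², where ψ is the Brownian-copula kernel. -/
open MeasureTheory Set Filter
open Topology

/-- Density of the standard normal distribution (φ). -/
noncomputable def stdNormalPDF (x : ℝ) : ℝ := (Real.sqrt (2 * Real.pi))⁻¹ * Real.exp (-x ^ 2 / 2)

/-- Cumulative distribution function of the standard normal distribution (Φ). -/
noncomputable def stdNormalCDF (x : ℝ) : ℝ := ∫ t in Set.Iic x, stdNormalPDF t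

/-- The standard normal quantile function (Φ⁻¹), the inverse of Φ on (0,1). -/
noncomputable def stdNormalCDFInv : ℝ → ℝ := Function.invFun stdNormalCDF

/-- The integrand of the Brownian-copula kernel; the `if` branches encode the
conventions Φ⁻¹(0) = -∞ (so Φ(·) = 0) and Φ⁻¹(1) = +∞ (so Φ(·) = 1). -/
noncomputable def psiIntegrand (s t v w : ℝ) : ℝ :=
  if v ≤ 0 then 0
  else if 1 ≤ v then 1
  else stdNormalCDF ((Real.sqrt (max s t) * stdNormalCDFInv v -
      Real.sqrt (min s t) * stdNormalCDFInv w) / Real.sqrt |t - s|)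

/-- The Brownian-copula kernel ψ(s,t;u,v). -/
noncomputable def psi (s t u v : ℝ) : ℝ :=
  if 0 < |t - s| then ∫ w in (0:ℝ)..u, psiIntegrand s t v w
  else if 0 < t then min u v
  else u * v

lemma stdNormalPDF_eq : stdNormalPDF = ProbabilityTheory.gaussianPDFReal 0 1 := by
  ext x
  simp [stdNormalPDF, ProbabilityTheory.gaussianPDFReal]

lemma pdf_pos (x : ℝ) : 0 < stdNormalPDF x := by
  rw [stdNormalPDF_eq]; exact ProbabilityTheory.gaussianPDFReal_pos 0 1 x one_ne_zero

lemma pdf_integrable : Integrable stdNormalPDF := by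
  rw [stdNormalPDF_eq]; exact ProbabilityTheory.integrable_gaussianPDFReal 0 1

lemma pdf_continuous : Continuous stdNormalPDF := by
  unfold stdNormalPDF; fun_prop

lemma integral_pdf : ∫ x, stdNormalPDF x = 1 := by
  rw [stdNormalPDF_eq]; exact ProbabilityTheory.integral_gaussianPDFReal_eq_one 0 one_ne_zero

lemma cdf_sub (x y : ℝ) : stdNormalCDF y - stdNormalCDF x = ∫ t in x..y, stdNormalPDF t :=
  intervalIntegral.integral_Iic_sub_Iic pdf_integrable.integrableOn pdf_integrable.integrableOn

lemma cdf_strictMono : StrictMono stdNormalCDF := by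
  intro x y hxy
  have h : 0 < ∫ t in x..y, stdNormalPDF t :=
    intervalIntegral.intervalIntegral_pos_of_pos pdf_integrable.intervalIntegrable pdf_pos hxy
  rw [← cdf_sub] at h; linarith

lemma cdf_continuous : Continuous stdNormalCDF := by
  have : stdNormalCDF = fun y => stdNormalCDF 0 + ∫ t in (0:ℝ)..y, stdNormalPDF t := by
    ext y; rw [← cdf_sub]; ring
  rw [this]
  exact continuous_const.add (pdf_integrable.continuous_primitive 0)

lemma cdf_pos (x : ℝ) : 0 < stdNormalCDF x := by
  rw [stdNormalCDF, setIntegral_pos_iff_support_of_nonneg_ae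
    (Eventually.of_forall fun t => (pdf_pos t).le) pdf_integrable.integrableOn]
  have : Function.support stdNormalPDF = univ := by
    ext t; simp [Function.mem_support, (pdf_pos t).ne']
  rw [this, univ_inter]
  simp [Real.volume_Iic]

lemma cdf_lt_one (x : ℝ) : stdNormalCDF x < 1 := by
  have h := intervalIntegral.integral_Iic_add_Ioi (b := x) (f := stdNormalPDF)
    pdf_integrable.integrableOn pdf_integrable.integrableOn
  rw [integral_pdf] at h
  have hpos : 0 < ∫ t in Ioi x, stdNormalPDF t := by
    rw [setIntegral_pos_iff_support_of_nonneg_ae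
      (Eventually.of_forall fun t => (pdf_pos t).le) pdf_integrable.integrableOn]
    have : Function.support stdNormalPDF = univ := by
      ext t; simp [Function.mem_support, (pdf_pos t).ne']
    rw [this, univ_inter]
    simp [Real.volume_Ioi]
  rw [stdNormalCDF]; linarith

lemma cdf_tendsto_atTop : Tendsto stdNormalCDF atTop (𝓝 1) := by
  rw [← integral_pdf]
  have heq : stdNormalCDF = fun x => ∫ t, (Iic x).indicator stdNormalPDF t := by
    ext x; rw [stdNormalCDF, ← integral_indicator measurableSet_Iic]
  rw [heq]
  refine tendsto_integral_filter_of_dominated_convergence stdNormalPDF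
    (Eventually.of_forall fun x => ?_) (Eventually.of_forall fun x => ?_)
    pdf_integrable (Eventually.of_forall fun t => ?_)
  · exact pdf_continuous.aestronglyMeasurable.indicator measurableSet_Iic
  · refine Eventually.of_forall fun t => ?_
    rw [Real.norm_eq_abs, abs_of_nonneg (indicator_nonneg (fun s _ => (pdf_pos s).le) t)]
    exact Set.indicator_le_self' (fun s _ => (pdf_pos s).le) t
  · refine tendsto_const_nhds.congr' ?_
    filter_upwards [eventually_ge_atTop t] with x hx
    simp [indicator_of_mem, hx]

lemma cdf_tendsto_atBot : Tendsto stdNormalCDF atBot (𝓝 0) := by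
  have heq : stdNormalCDF = fun x => ∫ t, (Iic x).indicator stdNormalPDF t := by
    ext x; rw [stdNormalCDF, ← integral_indicator measurableSet_Iic]
  rw [heq]
  have h0 : (0:ℝ) = ∫ _t : ℝ, (0:ℝ) := by simp
  rw [h0]
  refine tendsto_integral_filter_of_dominated_convergence stdNormalPDF
    (Eventually.of_forall fun x => ?_) (Eventually.of_forall fun x => ?_)
    pdf_integrable (Eventually.of_forall fun t => ?_)
  · exact pdf_continuous.aestronglyMeasurable.indicator measurableSet_Iic
  · refine Eventually.of_forall fun t => ?_
    rw [Real.norm_eq_abs, abs_of_nonneg (indicator_nonneg (fun s _ => (pdf_pos s).le) t)]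
    exact Set.indicator_le_self' (fun s _ => (pdf_pos s).le) t
  · refine tendsto_const_nhds.congr' ?_
    filter_upwards [eventually_lt_atBot t] with x hx
    simp [indicator_of_notMem, not_le.mpr hx]

lemma cdf_surj {y : ℝ} (hy : y ∈ Ioo (0:ℝ) 1) : ∃ x, stdNormalCDF x = y := by
  obtain ⟨a, ha⟩ := (cdf_tendsto_atBot.eventually_lt_const hy.1).exists
  obtain ⟨b, hb⟩ := (cdf_tendsto_atTop.eventually_const_lt hy.2).exists
  have hab : a ≤ b := by
    by_contra h
    exact absurd (cdf_strictMono (not_le.mp h)) (by linarith [ha, hb])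
  obtain ⟨x, _, hx⟩ := intermediate_value_Icc hab cdf_continuous.continuousOn
    ⟨ha.le, hb.le⟩
  exact ⟨x, hx⟩

lemma cdf_inv_eq {y : ℝ} (hy : y ∈ Ioo (0:ℝ) 1) : stdNormalCDF (stdNormalCDFInv y) = y :=
  Function.invFun_eq (cdf_surj hy)

lemma inv_cdf (x : ℝ) : stdNormalCDFInv (stdNormalCDF x) = x :=
  Function.leftInverse_invFun cdf_strictMono.injective x

lemma cdf_nonneg (x : ℝ) : 0 ≤ stdNormalCDF x := (cdf_pos x).le
lemma cdf_le_one (x : ℝ) : stdNormalCDF x ≤ 1 := (cdf_lt_one x).le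

lemma inv_strictMonoOn : StrictMonoOn stdNormalCDFInv (Ioo (0:ℝ) 1) := by
  intro a ha b hb hab
  by_contra h
  push_neg at h
  have := cdf_strictMono.monotone h
  rw [cdf_inv_eq ha, cdf_inv_eq hb] at this
  linarith

lemma inv_continuousOn : ContinuousOn stdNormalCDFInv (Ioo (0:ℝ) 1) := by
  intro y hy
  have hxy := cdf_inv_eq hy
  rw [ContinuousWithinAt, tendsto_order]
  constructor
  · intro b hb
    have hb' : stdNormalCDF b < y := by rw [← hxy]; exact cdf_strictMono hb
    filter_upwards [self_mem_nhdsWithin,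
      eventually_nhdsWithin_of_eventually_nhds (eventually_gt_nhds hb')] with z hz hz2
    by_contra h
    push_neg at h
    have := cdf_strictMono.monotone h
    rw [cdf_inv_eq hz] at this
    linarith
  · intro b hb
    have hb' : y < stdNormalCDF b := by rw [← hxy]; exact cdf_strictMono hb
    filter_upwards [self_mem_nhdsWithin,
      eventually_nhdsWithin_of_eventually_nhds (eventually_lt_nhds hb')] with z hz hz2
    by_contra h
    push_neg at h
    have := cdf_strictMono.monotone h
    rw [cdf_inv_eq hz] at this
    linarith

lemma integrand_mem (s t v w : ℝ) : psiIntegrand s t v w ∈ Icc (0:ℝ) 1 := by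
  unfold psiIntegrand
  split_ifs
  · exact ⟨le_rfl, zero_le_one⟩
  · exact ⟨zero_le_one, le_rfl⟩
  · exact ⟨cdf_nonneg _, cdf_le_one _⟩

lemma integrand_norm_le (s t v w : ℝ) : ‖psiIntegrand s t v w‖ ≤ 1 := by
  rw [Real.norm_eq_abs, abs_le]
  have := integrand_mem s t v w
  exact ⟨by linarith [this.1], this.2⟩

lemma integrand_aesm {u : ℝ} (hu : u ∈ Icc (0:ℝ) 1) (s t v : ℝ) :
    AEStronglyMeasurable (fun w => psiIntegrand s t v w)
      (volume.restrict (Set.uIoc (0:ℝ) u)) := by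
  rw [uIoc_of_le hu.1, ← Measure.restrict_congr_set Ioo_ae_eq_Ioc]
  have hsub : Ioo (0:ℝ) u ⊆ Ioo (0:ℝ) 1 := Ioo_subset_Ioo le_rfl hu.2
  have hco : ContinuousOn (fun w => psiIntegrand s t v w) (Ioo (0:ℝ) u) := by
    unfold psiIntegrand
    split_ifs
    · exact continuousOn_const
    · exact continuousOn_const
    · refine cdf_continuous.comp_continuousOn ?_
      refine ContinuousOn.div_const ?_ _
      exact (continuousOn_const.sub
        (continuousOn_const.mul ((inv_continuousOn.mono hsub))))
  exact hco.aestronglyMeasurable measurableSet_Ioo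

lemma offdiag_continuousAt {u v : ℝ} (hu : u ∈ Icc (0:ℝ) 1) {p₀ : ℝ × ℝ}
    (hne : p₀.1 ≠ p₀.2) :
    ContinuousAt (fun p : ℝ × ℝ => ∫ w in (0:ℝ)..u, psiIntegrand p.1 p.2 v w) p₀ := by
  refine intervalIntegral.continuousAt_of_dominated_interval
    (Eventually.of_forall fun p => integrand_aesm hu p.1 p.2 v)
    (Eventually.of_forall fun p => Eventually.of_forall fun w _ => integrand_norm_le _ _ _ _)
    intervalIntegrable_const (Eventually.of_forall fun w _ => ?_)
  unfold psiIntegrand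
  split_ifs
  · exact continuousAt_const
  · exact continuousAt_const
  · refine cdf_continuous.continuousAt.comp ?_
    have hden : Real.sqrt |p₀.2 - p₀.1| ≠ 0 := by
      rw [Real.sqrt_ne_zero']
      exact abs_pos.mpr (sub_ne_zero.mpr (Ne.symm hne))
    refine ContinuousAt.div ?_ ?_ hden
    · exact ((continuous_fst.max continuous_snd).sqrt.mul continuous_const).sub
        ((continuous_fst.min continuous_snd).sqrt.mul continuous_const) |>.continuousAt
    · exact ((continuous_snd.sub continuous_fst).abs.sqrt).continuousAt

lemma integral_indicator_eq_min {u v : ℝ} (hu0 : 0 ≤ u) (hu1 : u ≤ 1) (hv : v ∈ Ioo (0:ℝ) 1) :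
    ∫ w in (0:ℝ)..u, (if w < v then (1:ℝ) else 0) = min u v := by
  have : (fun w => if w < v then (1:ℝ) else 0) = (Iio v).indicator (fun _ => (1:ℝ)) := by
    ext w; by_cases h : w < v <;> simp [indicator, h, mem_Iio]
  rw [intervalIntegral.integral_of_le hu0, this,
    setIntegral_indicator measurableSet_Iio]
  rw [setIntegral_const, smul_eq_mul, mul_one]
  rcases le_or_gt v u with h | h
  · have : Ioc (0:ℝ) u ∩ Iio v = Ioo 0 v := by
      ext w
      simp only [mem_inter_iff, mem_Ioc, mem_Iio, mem_Ioo]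
      constructor
      · rintro ⟨⟨h1, _⟩, h3⟩; exact ⟨h1, h3⟩
      · rintro ⟨h1, h2⟩; exact ⟨⟨h1, le_trans h2.le h⟩, h2⟩
    rw [this, measureReal_def, Real.volume_Ioo, min_eq_right h, ENNReal.toReal_ofReal (by linarith [hv.1])]
    ring
  · have : Ioc (0:ℝ) u ∩ Iio v = Ioc 0 u := by
      rw [inter_eq_left]
      exact fun w hw => lt_of_le_of_lt hw.2 h
    rw [this, measureReal_def, Real.volume_Ioc, min_eq_left h.le, ENNReal.toReal_ofReal (by linarith)]
    ring

lemma diag_tendsto {u v : ℝ} (hu : u ∈ Icc (0:ℝ) 1) (hv : v ∈ Ioo (0:ℝ) 1)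
    {c : ℝ} (hc : 0 < c) :
    Tendsto (fun p : ℝ × ℝ => ∫ w in (0:ℝ)..u, psiIntegrand p.1 p.2 v w)
      (𝓝[{p : ℝ × ℝ | p.1 ≠ p.2}] (c, c)) (𝓝 (min u v)) := by
  rw [← integral_indicator_eq_min hu.1 hu.2 hv]
  refine intervalIntegral.tendsto_integral_filter_of_dominated_convergence
    (fun _ => (1:ℝ))
    (Eventually.of_forall fun p => integrand_aesm hu p.1 p.2 v)
    (Eventually.of_forall fun p => Eventually.of_forall fun w _ => integrand_norm_le _ _ _ _)
    intervalIntegrable_const ?_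
  have h1 : ∀ᵐ w : ℝ, w ≠ v := by
    rw [ae_iff]; simpa using measure_singleton v
  have h2 : ∀ᵐ w : ℝ, w ≠ (1:ℝ) := by
    rw [ae_iff]; simpa using measure_singleton (1:ℝ)
  filter_upwards [h1, h2] with w hwv hw1 hw
  rw [uIoc_of_le hu.1, mem_Ioc] at hw
  have hw01 : w ∈ Ioo (0:ℝ) 1 := ⟨hw.1, lt_of_le_of_ne (hw.2.trans hu.2) hw1⟩
  set a := stdNormalCDFInv v with ha_def
  set b := stdNormalCDFInv w with hb_def
  have hint : ∀ p : ℝ × ℝ, psiIntegrand p.1 p.2 v w =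
      stdNormalCDF ((Real.sqrt (max p.1 p.2) * a - Real.sqrt (min p.1 p.2) * b) /
        Real.sqrt |p.2 - p.1|) := by
    intro p
    unfold psiIntegrand
    rw [if_neg (not_le.mpr hv.1), if_neg (not_le.mpr hv.2)]
  simp only [hint]
  set l := 𝓝[{p : ℝ × ℝ | p.1 ≠ p.2}] ((c, c) : ℝ × ℝ) with hl_def
  have hN : Tendsto (fun p : ℝ × ℝ =>
      Real.sqrt (max p.1 p.2) * a - Real.sqrt (min p.1 p.2) * b) l
      (𝓝 (Real.sqrt c * (a - b))) := by
    have heq : Real.sqrt c * (a - b) =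
        Real.sqrt (max c c) * a - Real.sqrt (min c c) * b := by
      rw [max_self, min_self]; ring
    rw [heq]
    exact (((continuous_fst.max continuous_snd).sqrt.mul continuous_const).sub
      ((continuous_fst.min continuous_snd).sqrt.mul continuous_const)).tendsto (c, c)
      |>.mono_left nhdsWithin_le_nhds
  have hD : Tendsto (fun p : ℝ × ℝ => Real.sqrt |p.2 - p.1|) l (𝓝[>] 0) := by
    apply tendsto_nhdsWithin_of_tendsto_nhds_of_eventually_within
    · have h0 : Real.sqrt |c - c| = 0 := by simp
      have := ((continuous_snd.sub continuous_fst).abs.sqrt).tendsto ((c, c) : ℝ × ℝ)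
      simp only [Pi.sub_apply, sub_self, abs_zero, Real.sqrt_zero] at this
      exact this.mono_left nhdsWithin_le_nhds
    · filter_upwards [eventually_mem_nhdsWithin] with p hp
      exact Real.sqrt_pos.mpr (abs_pos.mpr (sub_ne_zero.mpr (Ne.symm hp)))
  have hDinv : Tendsto (fun p : ℝ × ℝ => (Real.sqrt |p.2 - p.1|)⁻¹) l atTop :=
    tendsto_inv_nhdsGT_zero.comp hD
  rcases lt_or_gt_of_ne hwv with hlt | hgt
  · have hba : b < a := inv_strictMonoOn hw01 hv hlt
    have hL : 0 < Real.sqrt c * (a - b) :=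
      mul_pos (Real.sqrt_pos.mpr hc) (by linarith)
    have harg : Tendsto (fun p : ℝ × ℝ =>
        (Real.sqrt (max p.1 p.2) * a - Real.sqrt (min p.1 p.2) * b) /
          Real.sqrt |p.2 - p.1|) l atTop := by
      simp only [div_eq_mul_inv]
      exact Filter.Tendsto.pos_mul_atTop hL hN hDinv
    rw [if_pos hlt]
    exact cdf_tendsto_atTop.comp harg
  · have hba : a < b := inv_strictMonoOn hv hw01 hgt
    have hL : Real.sqrt c * (a - b) < 0 :=
      mul_neg_of_pos_of_neg (Real.sqrt_pos.mpr hc) (by linarith)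
    have harg : Tendsto (fun p : ℝ × ℝ =>
        (Real.sqrt (max p.1 p.2) * a - Real.sqrt (min p.1 p.2) * b) /
          Real.sqrt |p.2 - p.1|) l atBot := by
      simp only [div_eq_mul_inv]
      exact Filter.Tendsto.neg_mul_atTop hL hN hDinv
    rw [if_neg (not_lt.mpr hgt.le)]
    exact cdf_tendsto_atBot.comp harg

/-- For every fixed u, v ∈ [0,1], the mapping (s,t) ↦ ψ(s,t;u,v) is continuous on (0,∞)². -/
theorem psi_continuousOn (u v : ℝ) (hu : u ∈ Set.Icc (0:ℝ) 1) (hv : v ∈ Set.Icc (0:ℝ) 1) :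
    ContinuousOn (fun p : ℝ × ℝ => psi p.1 p.2 u v) (Set.Ioi (0:ℝ) ×ˢ Set.Ioi (0:ℝ)) := by
  obtain ⟨hu0, hu1⟩ := hu
  obtain ⟨hv0, hv1⟩ := hv
  rcases eq_or_lt_of_le hv0 with hv0' | hv0'
  · -- v = 0 : ψ ≡ 0 on the domain
    refine (continuousOn_const (c := (0:ℝ))).congr fun p hp => ?_
    obtain ⟨hp1, hp2⟩ := hp
    unfold psi
    split_ifs with h h2
    · have hz : ∀ w, psiIntegrand p.1 p.2 v w = 0 := fun w => by
        unfold psiIntegrand; rw [if_pos hv0'.ge]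
      simp [hz]
    · rw [← hv0']; exact min_eq_right hu0
    · exact absurd hp2 h2
  rcases eq_or_lt_of_le hv1 with hv1' | hv1'
  · -- v = 1 : ψ ≡ u on the domain
    refine (continuousOn_const (c := u)).congr fun p hp => ?_
    obtain ⟨hp1, hp2⟩ := hp
    unfold psi
    split_ifs with h h2
    · have hz : ∀ w, psiIntegrand p.1 p.2 v w = 1 := fun w => by
        unfold psiIntegrand; rw [if_neg (by linarith), if_pos hv1'.ge]
      simp [hz]
    · rw [hv1']; exact min_eq_left hu1
    · exact absurd hp2 h2
  -- main case : 0 < v < 1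
  have hv' : v ∈ Ioo (0:ℝ) 1 := ⟨hv0', hv1'⟩
  rintro ⟨s₀, t₀⟩ ⟨hs₀, ht₀⟩
  simp only [mem_Ioi] at hs₀ ht₀
  by_cases hne : s₀ = t₀
  · -- diagonal point
    subst hne
    have hval : psi s₀ s₀ u v = min u v := by
      unfold psi
      rw [if_neg (by simp), if_pos ht₀]
    rw [ContinuousWithinAt]
    simp only [hval]
    have hle : 𝓝[Set.Ioi (0:ℝ) ×ˢ Set.Ioi (0:ℝ)] ((s₀, s₀) : ℝ × ℝ) ≤
        𝓝[{p : ℝ × ℝ | p.1 ≠ p.2}] (s₀, s₀) ⊔ 𝓝[{p : ℝ × ℝ | p.1 = p.2}] (s₀, s₀) := by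
      rw [← nhdsWithin_union]
      exact nhdsWithin_mono _ fun p _ => by
        by_cases h : p.1 = p.2
        · exact Or.inr h
        · exact Or.inl h
    refine Tendsto.mono_left ?_ hle
    rw [tendsto_sup]
    constructor
    · refine (diag_tendsto ⟨hu0, hu1⟩ hv' ht₀).congr' ?_
      filter_upwards [eventually_mem_nhdsWithin] with p hp
      unfold psi
      rw [if_pos (abs_pos.mpr (sub_ne_zero.mpr (Ne.symm hp)))]
    · refine tendsto_const_nhds.congr' ?_
      have hpos : ∀ᶠ p : ℝ × ℝ in 𝓝[{p : ℝ × ℝ | p.1 = p.2}] (s₀, s₀), 0 < p.2 :=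
        eventually_nhdsWithin_of_eventually_nhds
          ((continuous_snd.tendsto ((s₀, s₀) : ℝ × ℝ)).eventually (eventually_gt_nhds ht₀))
      filter_upwards [eventually_mem_nhdsWithin, hpos] with p hp hp2
      unfold psi
      rw [if_neg (by simp [hp]), if_pos hp2]
  · -- off-diagonal point
    refine ContinuousAt.continuousWithinAt ?_
    refine (offdiag_continuousAt (u := u) (v := v) ⟨hu0, hu1⟩ hne).congr ?_
    have hopen : IsOpen {p : ℝ × ℝ | p.1 ≠ p.2} :=
      isOpen_compl_iff.mpr (isClosed_eq continuous_fst continuous_snd)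
    filter_upwards [hopen.mem_nhds hne] with p hp
    unfold psi
    rw [if_pos (abs_pos.mpr (sub_ne_zero.mpr (Ne.symm hp)))]
end

section
/- Fix v ∈ (0,1) and 0 < s < t. For w ∈ (0,1) let h(w) = (√t·Φ⁻¹(v) − √s·Φ⁻¹(w))/√(t−s), and define D_t(w) = φ(h(w))·( Φ⁻¹(v)/(2·√(t·(t−s))) − h(w)/(2·(t−s)) ) and D_s(w) = φ(h(w))·( h(w)/(2·(t−s)) − Φ⁻¹(w)/(2·√(s·(t−s))) ). Then sup over w ∈ (0,1) of ‖(D_t(w), D_s(w))‖ is finite, i.e., the partial derivatives in s and t of the integrand of ψ are bounded uniformly in w. -/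
open MeasureTheory Set Filter

lemma abs_stdNormalPDF_le_one (x : ℝ) : |stdNormalPDF x| ≤ 1 := by
  rw [stdNormalPDF]
  have h2 : (1:ℝ) ≤ Real.sqrt (2*Real.pi) := by
    rw [show (1:ℝ) = Real.sqrt 1 by simp]
    exact Real.sqrt_le_sqrt (by nlinarith [Real.pi_gt_three])
  have h3 : Real.exp (-x^2/2) ≤ 1 := Real.exp_le_one_iff.mpr (by nlinarith [sq_nonneg x])
  have h1 : (0:ℝ) < Real.sqrt (2*Real.pi) := by linarith
  rw [abs_of_nonneg (by positivity)]
  have h4 : (Real.sqrt (2*Real.pi))⁻¹ ≤ 1 := by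
    rw [inv_le_one_iff₀]; right; exact h2
  nlinarith [Real.exp_pos (-x^2/2)]

lemma abs_stdNormalPDF_mul_le_one (x : ℝ) : |stdNormalPDF x * x| ≤ 1 := by
  rw [stdNormalPDF, abs_mul]
  have h2 : (1:ℝ) ≤ Real.sqrt (2*Real.pi) := by
    rw [show (1:ℝ) = Real.sqrt 1 by simp]
    exact Real.sqrt_le_sqrt (by nlinarith [Real.pi_gt_three])
  have h1 : (0:ℝ) < Real.sqrt (2*Real.pi) := by linarith
  have h4 : (Real.sqrt (2*Real.pi))⁻¹ ≤ 1 := by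
    rw [inv_le_one_iff₀]; right; exact h2
  have hkey : Real.exp (-x^2/2) * |x| ≤ 1 := by
    have he : |x| ≤ Real.exp (x^2/2) := by
      nlinarith [Real.add_one_le_exp (x^2/2), sq_nonneg (|x|-1), sq_abs x]
    have : Real.exp (-x^2/2) = (Real.exp (x^2/2))⁻¹ := by
      rw [← Real.exp_neg]; ring_nf
    rw [this]
    rw [inv_mul_le_iff₀ (Real.exp_pos _)]
    simpa using he
  rw [abs_of_nonneg (by positivity)]
  calc (Real.sqrt (2*Real.pi))⁻¹ * Real.exp (-x^2/2) * |x|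
      ≤ 1 * (Real.exp (-x^2/2) * |x|) := by
        rw [mul_assoc]
        apply mul_le_mul_of_nonneg_right h4 (by positivity)
    _ ≤ 1 := by rw [one_mul]; exact hkey

lemma key_affine (α β y : ℝ) : |α * stdNormalPDF y + β * (stdNormalPDF y * y)| ≤ |α| + |β| := by
  calc |α * stdNormalPDF y + β * (stdNormalPDF y * y)|
      ≤ |α * stdNormalPDF y| + |β * (stdNormalPDF y * y)| := abs_add_le _ _
    _ = |α| * |stdNormalPDF y| + |β| * |stdNormalPDF y * y| := by rw [abs_mul, abs_mul]
    _ ≤ |α| * 1 + |β| * 1 := by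
        gcongr
        · exact abs_stdNormalPDF_le_one y
        · exact abs_stdNormalPDF_mul_le_one y
    _ = |α| + |β| := by ring

/-- For v ∈ (0,1) and 0 < s < t, the partial derivatives in t and s of the integrand of
ψ are bounded uniformly in w ∈ (0,1). -/
theorem integrand_partials_bounded (v s t : ℝ) (hv : v ∈ Set.Ioo (0:ℝ) 1)
    (hs : 0 < s) (hst : s < t) :
    ∃ M : ℝ, ∀ w ∈ Set.Ioo (0:ℝ) 1,
      ‖((stdNormalPDF ((Real.sqrt t * stdNormalCDFInv v - Real.sqrt s * stdNormalCDFInv w) /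
            Real.sqrt (t - s)) *
          (stdNormalCDFInv v / (2 * Real.sqrt (t * (t - s))) -
            ((Real.sqrt t * stdNormalCDFInv v - Real.sqrt s * stdNormalCDFInv w) /
              Real.sqrt (t - s)) / (2 * (t - s))),
        (stdNormalPDF ((Real.sqrt t * stdNormalCDFInv v - Real.sqrt s * stdNormalCDFInv w) /
            Real.sqrt (t - s)) *
          (((Real.sqrt t * stdNormalCDFInv v - Real.sqrt s * stdNormalCDFInv w) /
              Real.sqrt (t - s)) / (2 * (t - s)) -
            stdNormalCDFInv w / (2 * Real.sqrt (s * (t - s)))))) : ℝ × ℝ)‖ ≤ M := by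
  have hts : 0 < t - s := by linarith
  have hct : (0:ℝ) < Real.sqrt (t - s) := Real.sqrt_pos.mpr hts
  have hcs : (0:ℝ) < Real.sqrt s := Real.sqrt_pos.mpr hs
  have hss : (0:ℝ) < Real.sqrt (s * (t - s)) := Real.sqrt_pos.mpr (by positivity)
  refine ⟨(|stdNormalCDFInv v / (2 * Real.sqrt (t * (t - s)))| + |-(1 / (2 * (t - s)))|) +
      (|-(Real.sqrt t * stdNormalCDFInv v) / (Real.sqrt s * (2 * Real.sqrt (s * (t - s))))| +
       |1 / (2 * (t - s)) + Real.sqrt (t - s) / (Real.sqrt s * (2 * Real.sqrt (s * (t - s))))|),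
    ?_⟩
  intro w hw
  set x := stdNormalCDFInv w with hxdef
  set y := (Real.sqrt t * stdNormalCDFInv v - Real.sqrt s * x) / Real.sqrt (t - s) with hy
  have hx : x = (Real.sqrt t * stdNormalCDFInv v - Real.sqrt (t - s) * y) / Real.sqrt s := by
    rw [hy]; field_simp; ring
  have h1 : |stdNormalPDF y * (stdNormalCDFInv v / (2 * Real.sqrt (t * (t - s))) -
      y / (2 * (t - s)))| ≤
      |stdNormalCDFInv v / (2 * Real.sqrt (t * (t - s)))| + |-(1 / (2 * (t - s)))| := by
    have e1 : stdNormalPDF y * (stdNormalCDFInv v / (2 * Real.sqrt (t * (t - s))) -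
        y / (2 * (t - s))) =
        (stdNormalCDFInv v / (2 * Real.sqrt (t * (t - s)))) * stdNormalPDF y +
        (-(1 / (2 * (t - s)))) * (stdNormalPDF y * y) := by ring
    rw [e1]; exact key_affine _ _ y
  have h2 : |stdNormalPDF y * (y / (2 * (t - s)) - x / (2 * Real.sqrt (s * (t - s))))| ≤
      |-(Real.sqrt t * stdNormalCDFInv v) / (Real.sqrt s * (2 * Real.sqrt (s * (t - s))))| +
      |1 / (2 * (t - s)) + Real.sqrt (t - s) / (Real.sqrt s * (2 * Real.sqrt (s * (t - s))))| := by
    have e2 : stdNormalPDF y * (y / (2 * (t - s)) - x / (2 * Real.sqrt (s * (t - s)))) =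
        (-(Real.sqrt t * stdNormalCDFInv v) / (Real.sqrt s * (2 * Real.sqrt (s * (t - s))))) *
          stdNormalPDF y +
        (1 / (2 * (t - s)) + Real.sqrt (t - s) / (Real.sqrt s * (2 * Real.sqrt (s * (t - s))))) *
          (stdNormalPDF y * y) := by
      rw [hx]; field_simp; ring
    rw [e2]; exact key_affine _ _ y
  rw [Prod.norm_def, Real.norm_eq_abs, Real.norm_eq_abs]
  have n1 : (0:ℝ) ≤ |stdNormalCDFInv v / (2 * Real.sqrt (t * (t - s)))| + |-(1 / (2 * (t - s)))| :=
    by positivity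
  have n2 : (0:ℝ) ≤
      |-(Real.sqrt t * stdNormalCDFInv v) / (Real.sqrt s * (2 * Real.sqrt (s * (t - s))))| +
      |1 / (2 * (t - s)) + Real.sqrt (t - s) / (Real.sqrt s * (2 * Real.sqrt (s * (t - s))))| :=
    by positivity
  apply max_le <;> [linarith; linarith]
end
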